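/- arXiv:1405.6412 — 3 statements merged into one kernel-verified Lean document; each statement's English description precedes it below -/
import Mathlib

section
/- Minkowski's determinant inequality: for symmetric positive semidefinite n×n matrices A and B, det(A + B)^{1/n} ≥ det(A)^{1/n} + det(B)^{1/n}. -/
/-!
If `P` is positive definite, write `P = S * S` with `S = √P` and `Q = S * C * S`; then
`det Q = det P * det C` and `det (P + Q) = det P * det (1 + C)`, so it suffices to treat `P = 1`.
Diagonalising `C`, the inequality `1 + (det C)^(1/n) ≤ det (1 + C)^(1/n)` becomes
superadditivity of the geometric mean, which is AM-GM applied to the ratios `aᵢ / (aᵢ + bᵢ)` and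
`bᵢ / (aᵢ + bᵢ)`.
A singular summand has determinant `0`, and then the other summand can play the role of `P`.
-/

open Matrix Finset

theorem Real.geom_mean_add_geom_mean_le {ι : Type*} [Fintype ι] [Nonempty ι] {a b : ι → ℝ}
    (ha : ∀ i, 0 ≤ a i) (hb : ∀ i, 0 ≤ b i) :
    (∏ i, a i) ^ (Fintype.card ι : ℝ)⁻¹ + (∏ i, b i) ^ (Fintype.card ι : ℝ)⁻¹ ≤
      (∏ i, (a i + b i)) ^ (Fintype.card ι : ℝ)⁻¹ := by
  set r := (Fintype.card ι : ℝ)⁻¹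
  have hr : 0 < r := by positivity
  by_cases hzero : ∃ i, a i + b i = 0
  · obtain ⟨i, hi⟩ := hzero
    have ha0 : ∏ i, a i = 0 := prod_eq_zero (mem_univ i) (by linarith [ha i, hb i])
    have hb0 : ∏ i, b i = 0 := prod_eq_zero (mem_univ i) (by linarith [ha i, hb i])
    rw [ha0, hb0, Real.zero_rpow hr.ne', zero_add]
    exact Real.rpow_nonneg (prod_nonneg fun i _ => add_nonneg (ha i) (hb i)) r
  push Not at hzero
  have hpos : ∀ i, 0 < a i + b i := fun i => (add_nonneg (ha i) (hb i)).lt_of_ne' (hzero i)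
  have hw : ∑ _i : ι, r = 1 := by simp [r]
  have amgm (c : ι → ℝ) (hc : ∀ i, 0 ≤ c i) :
      (∏ i, c i) ^ r / (∏ i, (a i + b i)) ^ r ≤ ∑ i, r * (c i / (a i + b i)) := by
    rw [← Real.div_rpow (prod_nonneg fun i _ => hc i) (prod_nonneg fun i _ => (hpos i).le),
      ← prod_div_distrib, ← Real.finsetProd_rpow _ _ fun i _ => div_nonneg (hc i) (hpos i).le]
    exact Real.geom_mean_le_arith_mean_weighted univ (fun _ => r) _ (fun _ _ => hr.le) hw
      fun i _ => div_nonneg (hc i) (hpos i).le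
  have hsum : ∑ i, r * (a i / (a i + b i)) + ∑ i, r * (b i / (a i + b i)) = 1 := by
    rw [← sum_add_distrib, ← hw]
    refine sum_congr rfl fun i _ => ?_
    rw [← mul_add, ← add_div, div_self (hpos i).ne', mul_one]
  have hG : 0 < (∏ i, (a i + b i)) ^ r :=
    Real.rpow_pos_of_pos (prod_pos fun i _ => hpos i) r
  have := add_le_add (amgm a ha) (amgm b hb)
  rwa [hsum, ← add_div, div_le_one hG] at this

section

variable {ι 𝕜 : Type*} [Fintype ι] [DecidableEq ι] [RCLike 𝕜]

theorem Matrix.IsHermitian.det_cfc {A : Matrix ι ι 𝕜} (hA : A.IsHermitian) (f : ℝ → ℝ) :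
    (cfc f A).det = ∏ i, (f (hA.eigenvalues i) : 𝕜) := by
  rw [hA.cfc_eq, IsHermitian.cfc, det_map, det_diagonal]
  rfl

theorem Matrix.IsHermitian.det_one_add {A : Matrix ι ι 𝕜} (hA : A.IsHermitian) :
    (1 + A).det = ∏ i, (1 + (hA.eigenvalues i : 𝕜)) := by
  have : 1 + A = cfc (fun x : ℝ => 1 + x) A := by
    rw [cfc_add .., cfc_const_one .., cfc_id' ..]
  rw [this, hA.det_cfc]
  push_cast
  rfl

open scoped MatrixOrder ComplexOrder in
theorem Matrix.PosDef.exists_posSemidef_det_add_eq {P Q : Matrix ι ι 𝕜} (hP : P.PosDef)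
    (hQ : Q.PosSemidef) :
    ∃ C : Matrix ι ι 𝕜,
      C.PosSemidef ∧ Q.det = P.det * C.det ∧ (P + Q).det = P.det * (1 + C).det := by
  set S := CFC.sqrt P
  have hS : S.IsHermitian := (CFC.sqrt_nonneg P).posSemidef.isHermitian
  have hSS : S * S = P := CFC.sqrt_mul_sqrt_self P hP.posSemidef.nonneg
  have hSu : IsUnit S := (CFC.isUnit_sqrt_iff P).2 hP.isUnit
  have hSdet : IsUnit S.det := (isUnit_iff_isUnit_det S).1 hSu
  set C := S⁻¹ * Q * S⁻¹
  have hQC : Q = S * C * S := by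
    simp only [C, ← Matrix.mul_assoc, mul_nonsing_inv S hSdet, Matrix.one_mul]
    rw [Matrix.mul_assoc, nonsing_inv_mul S hSdet, Matrix.mul_one]
  have hC : C.PosSemidef := by
    simpa [conjTranspose_nonsing_inv, hS.eq] using hQ.conjTranspose_mul_mul_same S⁻¹
  clear_value C
  have hPQ : P + Q = S * (1 + C) * S := by
    rw [hQC, ← hSS, Matrix.mul_add, Matrix.add_mul, Matrix.mul_one]
  refine ⟨C, hC, ?_, ?_⟩
  · rw [hQC, ← hSS, det_mul, det_mul, det_mul]; ring
  · rw [hPQ, ← hSS, det_mul, det_mul, det_mul]; ring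

theorem Matrix.PosSemidef.one_add_det_rpow_le [Nonempty ι] {C : Matrix ι ι ℝ}
    (hC : C.PosSemidef) :
    1 + C.det ^ (Fintype.card ι : ℝ)⁻¹ ≤ (1 + C).det ^ (Fintype.card ι : ℝ)⁻¹ := by
  simpa [hC.1.det_one_add, hC.1.det_eq_prod_eigenvalues] using
    Real.geom_mean_add_geom_mean_le (a := fun _ => 1) (fun _ => zero_le_one)
      hC.eigenvalues_nonneg

theorem Matrix.PosDef.det_rpow_add_le [Nonempty ι] {P Q : Matrix ι ι ℝ} (hP : P.PosDef)
    (hQ : Q.PosSemidef) :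
    P.det ^ (Fintype.card ι : ℝ)⁻¹ + Q.det ^ (Fintype.card ι : ℝ)⁻¹ ≤
      (P + Q).det ^ (Fintype.card ι : ℝ)⁻¹ := by
  obtain ⟨C, hC, hdetQ, hdetPQ⟩ := hP.exists_posSemidef_det_add_eq hQ
  have hdetP := hP.det_pos
  rw [hdetQ, hdetPQ, Real.mul_rpow hdetP.le hC.det_nonneg,
    Real.mul_rpow hdetP.le (PosSemidef.one.add hC).det_nonneg, ← mul_one_add]
  exact mul_le_mul_of_nonneg_left hC.one_add_det_rpow_le (by positivity)

theorem Matrix.PosSemidef.det_rpow_add_le [Nonempty ι] {A B : Matrix ι ι ℝ}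
    (hA : A.PosSemidef) (hB : B.PosSemidef) :
    A.det ^ (Fintype.card ι : ℝ)⁻¹ + B.det ^ (Fintype.card ι : ℝ)⁻¹ ≤
      (A + B).det ^ (Fintype.card ι : ℝ)⁻¹ := by
  by_cases hA' : A.PosDef
  · exact hA'.det_rpow_add_le hB
  by_cases hB' : B.PosDef
  · rw [add_comm, add_comm A]
    exact hB'.det_rpow_add_le hA
  rw [hA.posDef_iff_det_ne_zero, not_not] at hA'
  rw [hB.posDef_iff_det_ne_zero, not_not] at hB'
  rw [hA', hB', Real.zero_rpow (by positivity), zero_add]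
  exact Real.rpow_nonneg (hA.add hB).det_nonneg _

end

/-- Minkowski's determinant inequality: for symmetric PSD `n×n` matrices `A` and `B`,
`det (A + B)^{1/n} ≥ det A^{1/n} + det B^{1/n}`. -/
theorem minkowski_det_inequality {n : ℕ} (hn : 0 < n)
    (A B : Matrix (Fin n) (Fin n) ℝ) (hA : A.PosSemidef) (hB : B.PosSemidef) :
    A.det ^ ((n : ℝ)⁻¹) + B.det ^ ((n : ℝ)⁻¹) ≤ (A + B).det ^ ((n : ℝ)⁻¹) := by
  have : Nonempty (Fin n) := ⟨⟨0, hn⟩⟩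
  simpa using hA.det_rpow_add_le hB
end

section
/- For the discretized empirical Gramian of a linear system y = Cx, ẋ = Ax, with perturbation direction sets T = {I, −I} and any perturbation size c > 0, the contributions from +I and −I are equal, and the resulting empirical Gramian equals Σ_k (e^{Aᵀ t_k} Cᵀ C e^{A t_k}) Δt_k, independent of c. -/
open Matrix NormedSpace Finset

/-! Each snapshot matrix is `(±c)² (C e^{At})ᵀ (C e^{At}) = c² e^{Aᵀt} Cᵀ C e^{At}`, and conjugating
by `±I` does not change it, so both directions contribute `c²` times the same sum and the
weight `1 / (2c²)` cancels. -/

theorem Matrix.of_sum_smul_mul_smul {o m R : Type*} [Fintype o] [CommRing R]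
    (a : R) (M : Matrix o m R) :
    (of fun i j => ∑ k, (a * M k i) * (a * M k j)) = a ^ 2 • (Mᵀ * M) := by
  ext i j
  simp only [of_apply, smul_apply, smul_eq_mul, mul_apply, transpose_apply, Finset.mul_sum]
  exact Finset.sum_congr rfl fun k _ => by ring

theorem Matrix.exp_smul_transpose_mul_mul_exp_smul {n p : Type*} [Fintype n] [Fintype p]
    [DecidableEq n]
    (A : Matrix n n ℝ) (C : Matrix p n ℝ) (s : ℝ) :
    exp (s • Aᵀ) * (Cᵀ * C) * exp (s • A) = (C * exp (s • A))ᵀ * (C * exp (s • A)) := by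
  rw [← transpose_smul, exp_transpose, transpose_mul]
  simp only [Matrix.mul_assoc]

/-- For the discretized empirical Gramian of the linear system `ẋ = Ax, y = Cx` with
perturbation directions `T = {I, −I}` and any perturbation size `c > 0`, the contributions
from `+I` and `−I` are equal, and the resulting empirical Gramian equals
`Σ_k Δt_k e^{Aᵀ t_k} Cᵀ C e^{A t_k}`, independently of `c`. -/
theorem empirical_gramian_linear {n p K : ℕ}
    (A : Matrix (Fin n) (Fin n) ℝ) (C : Matrix (Fin p) (Fin n) ℝ)
    (c : ℝ) (hc : 0 < c) (t Δt : ℕ → ℝ)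
    (Tdir : Fin 2 → Matrix (Fin n) (Fin n) ℝ)
    (hTdir : Tdir = ![(1 : Matrix (Fin n) (Fin n) ℝ), -1])
    (sgn : Fin 2 → ℝ) (hsgn : sgn = ![1, -1])
    (Ψ : Fin 2 → ℕ → Matrix (Fin n) (Fin n) ℝ)
    (hΨ : Ψ = fun l k => Matrix.of fun i j =>
      ∑ o : Fin p, (sgn l * c * (C * exp (t k • A)) o i) *
        (sgn l * c * (C * exp (t k • A)) o j)) :
    (∀ k, Tdir 0 * Ψ 0 k * (Tdir 0)ᵀ = Tdir 1 * Ψ 1 k * (Tdir 1)ᵀ) ∧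
    (∑ l : Fin 2, (1 / (2 * c ^ 2)) • ∑ k ∈ Finset.range K,
        (Δt k) • (Tdir l * Ψ l k * (Tdir l)ᵀ))
      = ∑ k ∈ Finset.range K,
        (Δt k) • (exp (t k • Aᵀ) * (Cᵀ * C) * exp (t k • A)) := by
  have hconj : ∀ l k, Tdir l * Ψ l k * (Tdir l)ᵀ =
      c ^ 2 • (exp (t k • Aᵀ) * (Cᵀ * C) * exp (t k • A)) := by
    intro l k
    have hsq : (sgn l * c) ^ 2 = c ^ 2 := by fin_cases l <;> simp [hsgn]
    simp only [hΨ]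
    rw [of_sum_smul_mul_smul, hsq, exp_smul_transpose_mul_mul_exp_smul]
    fin_cases l <;> simp [hTdir]
  refine ⟨fun k => by rw [hconj 0 k, hconj 1 k], ?_⟩
  have hsum : ∀ l, ∑ k ∈ Finset.range K, Δt k • (Tdir l * Ψ l k * (Tdir l)ᵀ) =
      c ^ 2 • ∑ k ∈ Finset.range K, Δt k • (exp (t k • Aᵀ) * (Cᵀ * C) * exp (t k • A)) := by
    intro l
    rw [Finset.smul_sum]
    exact Finset.sum_congr rfl fun k _ => by rw [hconj, smul_comm]
  have hcoef : 1 / (2 * c ^ 2) * c ^ 2 + 1 / (2 * c ^ 2) * c ^ 2 = 1 := by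
    field_simp
    ring
  rw [Fin.sum_univ_two, hsum, hsum, smul_smul, ← add_smul, hcoef, one_smul]
end

section
/- The empirical observability Gramian of a linear system equals the Riemann-sum approximation of the exact observability Gramian and converges to ∫₀^{t_f} e^{Aᵀt} Cᵀ C e^{At} dt as the mesh of the time discretization tends to zero. -/
/-!
The signs `±1` square away and conjugation by `±I` is trivial, so both directions contribute
`c² (C e^{sA})ᵀ (C e^{sA}) = c² F(s)` at each sample time, and after the normalisation
`1/(2c²)` the empirical Gramian is exactly the left-endpoint Riemann sum of `F`. Since `F` is
continuous, it is uniformly continuous on `[0, t_f]`: once the mesh is below a modulus of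
continuity for `η`, each Riemann term differs from the integral over its subinterval by at most
`η Δt_k`, and these errors add up to at most `η t_f`.
-/

open Matrix NormedSpace Finset MeasureTheory

attribute [local instance] Matrix.normedAddCommGroup Matrix.normedSpace

section RiemannSum

variable {E : Type*} [NormedAddCommGroup E] [NormedSpace ℝ E]

def riemannSum (f : ℝ → E) (t : ℕ → ℝ) (K : ℕ) : E :=
  ∑ k ∈ range K, (t (k + 1) - t k) • f (t k)

theorem norm_riemannSum_sub_integral_le [CompleteSpace E] {f : ℝ → E} {t : ℕ → ℝ} {K : ℕ}
    {η : ℝ} (hmono : ∀ k < K, t k ≤ t (k + 1))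
    (hf : ∀ k < K, IntervalIntegrable f volume (t k) (t (k + 1)))
    (hη : ∀ k < K, ∀ s ∈ Set.Ioc (t k) (t (k + 1)), ‖f (t k) - f s‖ ≤ η) :
    ‖riemannSum f t K - ∫ s in t 0..t K, f s‖ ≤ η * (t K - t 0) := by
  have hpiece : ∀ k < K, ‖(t (k + 1) - t k) • f (t k) - ∫ s in t k..t (k + 1), f s‖
      ≤ η * (t (k + 1) - t k) := by
    intro k hk
    rw [← intervalIntegral.integral_const, ← intervalIntegral.integral_sub
      intervalIntegrable_const (hf k hk)]
    simpa only [abs_of_nonneg (sub_nonneg.2 (hmono k hk))] using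
      intervalIntegral.norm_integral_le_of_norm_le_const fun s hs =>
        hη k hk s (Set.uIoc_of_le (hmono k hk) ▸ hs)
  rw [riemannSum, ← intervalIntegral.sum_integral_adjacent_intervals hf, ← sum_sub_distrib,
    ← sum_range_sub, mul_sum]
  exact (norm_sum_le _ _).trans (sum_le_sum fun k hk => hpiece k (mem_range.1 hk))

theorem exists_pos_forall_norm_riemannSum_sub_integral_lt [CompleteSpace E] {f : ℝ → E}
    {a b : ℝ} (hf : ContinuousOn f (Set.Icc a b)) {ε : ℝ} (hε : 0 < ε) :
    ∃ δ > 0, ∀ (K : ℕ) (t : ℕ → ℝ), t 0 = a → t K = b → (∀ k < K, t k ≤ t (k + 1)) →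
      (∀ k < K, t (k + 1) - t k < δ) → ‖riemannSum f t K - ∫ s in a..b, f s‖ < ε := by
  -- `|b - a| + 1` rather than `b - a`, so that `η > 0` even for a degenerate interval
  set η := ε / (|b - a| + 1)
  have hη : 0 < η := by positivity
  obtain ⟨δ, hδ, hfδ⟩ := Metric.uniformContinuousOn_iff.1
    (isCompact_Icc.uniformContinuousOn_of_continuous hf) η hη
  refine ⟨δ, hδ, fun K t ht0 htK hmono hmesh => ?_⟩
  have ht : ∀ k ≤ K, t k ∈ Set.Icc a b := fun k hk => by
    have h := monotoneOn_of_le_add_one (f := t) (Set.ordConnected_Iic (a := K))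
      fun k _ _ hk => hmono k hk
    exact ⟨ht0 ▸ h (Nat.zero_le K) hk (Nat.zero_le k), htK ▸ h hk (le_refl K) hk⟩
  have hIcc : ∀ k < K, Set.uIcc (t k) (t (k + 1)) ⊆ Set.Icc a b := fun k hk =>
    Set.uIcc_subset_Icc (ht k hk.le) (ht (k + 1) hk)
  have hbound := norm_riemannSum_sub_integral_le hmono
    (fun k hk => (hf.mono (hIcc k hk)).intervalIntegrable) fun k hk s hs => by
      rw [← dist_eq_norm]
      have hs' := hIcc k hk (Set.Icc_subset_uIcc (Set.Ioc_subset_Icc_self hs))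
      refine (hfδ _ (ht k hk.le) _ hs' ?_).le
      rw [Real.dist_eq, abs_sub_comm, abs_of_pos (sub_pos.2 hs.1)]
      linarith [hs.2, hmesh k hk]
  rw [ht0, htK] at hbound
  calc _ ≤ η * (b - a) := hbound
    _ ≤ η * |b - a| := by gcongr; exact le_abs_self _
    _ < η * (|b - a| + 1) := by gcongr; linarith
    _ = ε := div_mul_cancel₀ _ (by positivity)

end RiemannSum

namespace Matrix

variable {m n : Type*} [Fintype m]

theorem of_sum_mul_mul_eq_sq_smul_transpose_mul {R : Type*} [CommRing R] (a : R)
    (X : Matrix m n R) :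
    (of fun i j => ∑ o, a * X o i * (a * X o j)) = a ^ 2 • (Xᵀ * X) := by
  ext i j
  simp only [of_apply, smul_apply, mul_apply, transpose_apply, smul_eq_mul, mul_sum]
  exact sum_congr rfl fun _ _ => by ring

theorem exp_smul_transpose_mul_mul_exp_smul_s16 [Fintype n] [DecidableEq n] {p : Type*} [Fintype p]
    (s : ℝ) (A : Matrix n n ℝ) (C : Matrix p n ℝ) :
    exp (s • Aᵀ) * (Cᵀ * C) * exp (s • A) = (C * exp (s • A))ᵀ * (C * exp (s • A)) := by
  rw [← transpose_smul, exp_transpose, transpose_mul, Matrix.mul_assoc, Matrix.mul_assoc,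
    Matrix.mul_assoc]

theorem continuous_exp_smul [Fintype n] [DecidableEq n] (A : Matrix n n ℝ) :
    Continuous fun s : ℝ => exp (s • A) := by
  -- `exp_continuous` needs a Banach-algebra norm; any norm induces the same topology
  let hR : NormedRing (Matrix n n ℝ) := Matrix.linftyOpNormedRing
  let _ : NormedAlgebra ℝ (Matrix n n ℝ) := Matrix.linftyOpNormedAlgebra
  let _ : NormedAlgebra ℚ (Matrix n n ℝ) := .restrictScalars ℚ ℝ _
  have : @CompleteSpace (Matrix n n ℝ) hR.toUniformSpace := FiniteDimensional.complete ℝ _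
  exact exp_continuous.comp (continuous_id.smul continuous_const : Continuous fun s : ℝ => s • A)

end Matrix

theorem empirical_gramian_riemann_sum_tendsto_general {n p : ℕ}
    (A : Matrix (Fin n) (Fin n) ℝ) (C : Matrix (Fin p) (Fin n) ℝ)
    (c : ℝ) (hc : 0 < c) (tf : ℝ)
    (Tdir : Fin 2 → Matrix (Fin n) (Fin n) ℝ)
    (hTdir : Tdir = ![(1 : Matrix (Fin n) (Fin n) ℝ), -1])
    (sgn : Fin 2 → ℝ) (hsgn : sgn = ![1, -1])
    (F : ℝ → Matrix (Fin n) (Fin n) ℝ)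
    (hF : F = fun s => NormedSpace.exp (s • Aᵀ) * (Cᵀ * C) * NormedSpace.exp (s • A))
    (Ψ : (ℕ → ℝ) → Fin 2 → ℕ → Matrix (Fin n) (Fin n) ℝ)
    (hΨ : Ψ = fun t l k => Matrix.of fun i j =>
      ∑ o : Fin p, (sgn l * c * (C * NormedSpace.exp (t k • A)) o i) *
        (sgn l * c * (C * NormedSpace.exp (t k • A)) o j))
    (G : (ℕ → ℝ) → ℕ → Matrix (Fin n) (Fin n) ℝ)
    (hG : G = fun t K => ∑ l : Fin 2, (1 / (2 * c ^ 2)) •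
      ∑ k ∈ Finset.range K, (t (k + 1) - t k) • (Tdir l * Ψ t l k * (Tdir l)ᵀ)) :
    (∀ (K : ℕ) (t : ℕ → ℝ),
        G t K = ∑ k ∈ Finset.range K, (t (k + 1) - t k) • F (t k)) ∧
    (∀ ε > (0 : ℝ), ∃ δ > (0 : ℝ), ∀ (K : ℕ) (t : ℕ → ℝ), 0 < K →
        t 0 = 0 → t K = tf →
        (∀ k < K, t k < t (k + 1)) → (∀ k < K, t (k + 1) - t k < δ) →
        ‖G t K - ∫ s in (0 : ℝ)..tf, F s‖ < ε) := by
  have hconj : ∀ l X, Tdir l * X * (Tdir l)ᵀ = X := by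
    subst hTdir
    intro l X
    fin_cases l <;> simp
  have hΨF : ∀ t l k, Ψ t l k = c ^ 2 • F (t k) := by
    subst hsgn hΨ hF
    intro t l k
    beta_reduce
    rw [of_sum_mul_mul_eq_sq_smul_transpose_mul, exp_smul_transpose_mul_mul_exp_smul_s16, mul_pow]
    fin_cases l <;> simp
  have hGF : ∀ K t, G t K = riemannSum F t K := by
    intro K t
    rw [riemannSum]
    simp only [hG, hconj, hΨF, smul_comm (t _ - t _) (c ^ 2), ← smul_sum, sum_const, card_univ,
      Fintype.card_fin]
    match_scalars
    field_simp
  refine ⟨hGF, fun ε hε => ?_⟩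
  have hFc : Continuous F := hF ▸
    ((continuous_exp_smul Aᵀ).matrix_mul continuous_const).matrix_mul (continuous_exp_smul A)
  obtain ⟨δ, hδ, hδε⟩ :=
    exists_pos_forall_norm_riemannSum_sub_integral_lt (a := 0) (b := tf) hFc.continuousOn hε
  exact ⟨δ, hδ, fun K t _ ht0 htK hlt hmesh =>
    hGF K t ▸ hδε K t ht0 htK (fun k hk => (hlt k hk).le) hmesh⟩

/-- The empirical observability Gramian of a linear system (directions `{I, −I}`, size `c > 0`,
partition `0 = t_0 < … < t_K = t_f`) equals the Riemann-sum approximation of the exact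
observability Gramian, and converges to `∫₀^{t_f} e^{Aᵀt} Cᵀ C e^{At} dt` as the mesh of the
time discretization tends to zero. -/
theorem empirical_gramian_riemann_sum_tendsto {n p : ℕ}
    (A : Matrix (Fin n) (Fin n) ℝ) (C : Matrix (Fin p) (Fin n) ℝ)
    (c : ℝ) (hc : 0 < c) (tf : ℝ) (htf : 0 < tf)
    (Tdir : Fin 2 → Matrix (Fin n) (Fin n) ℝ)
    (hTdir : Tdir = ![(1 : Matrix (Fin n) (Fin n) ℝ), -1])
    (sgn : Fin 2 → ℝ) (hsgn : sgn = ![1, -1])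
    (F : ℝ → Matrix (Fin n) (Fin n) ℝ)
    (hF : F = fun s => NormedSpace.exp (s • Aᵀ) * (Cᵀ * C) * NormedSpace.exp (s • A))
    (Ψ : (ℕ → ℝ) → Fin 2 → ℕ → Matrix (Fin n) (Fin n) ℝ)
    (hΨ : Ψ = fun t l k => Matrix.of fun i j =>
      ∑ o : Fin p, (sgn l * c * (C * NormedSpace.exp (t k • A)) o i) *
        (sgn l * c * (C * NormedSpace.exp (t k • A)) o j))
    (G : (ℕ → ℝ) → ℕ → Matrix (Fin n) (Fin n) ℝ)
    (hG : G = fun t K => ∑ l : Fin 2, (1 / (2 * c ^ 2)) •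
      ∑ k ∈ Finset.range K, (t (k + 1) - t k) • (Tdir l * Ψ t l k * (Tdir l)ᵀ)) :
    (∀ (K : ℕ) (t : ℕ → ℝ),
        G t K = ∑ k ∈ Finset.range K, (t (k + 1) - t k) • F (t k)) ∧
    (∀ ε > (0 : ℝ), ∃ δ > (0 : ℝ), ∀ (K : ℕ) (t : ℕ → ℝ), 0 < K →
        t 0 = 0 → t K = tf →
        (∀ k < K, t k < t (k + 1)) → (∀ k < K, t (k + 1) - t k < δ) →
        ‖G t K - ∫ s in (0 : ℝ)..tf, F s‖ < ε) :=
  empirical_gramian_riemann_sum_tendsto_general A C c hc tf Tdir hTdir sgn hsgn F hF Ψ hΨ G hG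
end
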